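/- Let Λ be a level-sentence set and let A be a set of sentences and φ a sentence such that A does not prove φ ↔ ψ for any ψ ∈ ¬Λ. Then there exist complete consistent theories T⁺ ⊇ A ∪ {φ} and T⁻ ⊇ A ∪ {¬φ} such that Λ ∩ T⁻ ⊆ Λ ∩ T⁺. -/
import Mathlib

open FirstOrder FirstOrder.Language

/-- `QHier b k φ`: `φ` is a `∃ₖ`-formula (if `b = true`) or a `∀ₖ`-formula (if `b = false`),
i.e. a prenex formula with at most `k` alternating quantifier blocks, beginning with `∃`
(resp. `∀`). -/
inductive QHier {L : FirstOrder.Language} {α : Type} : Bool → ℕ → {n : ℕ} → L.BoundedFormula α n → Prop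
  | qf {b k n} {φ : L.BoundedFormula α n} : φ.IsQF → QHier b k φ
  | ex {k n} {φ : L.BoundedFormula α (n + 1)} : QHier true (k + 1) φ → QHier true (k + 1) φ.ex
  | all {k n} {φ : L.BoundedFormula α (n + 1)} : QHier false (k + 1) φ → QHier false (k + 1) φ.all
  | dual {b k n} {φ : L.BoundedFormula α n} : QHier (!b) k φ → QHier b (k + 1) φ

/-- The set of `∃ₖ`-sentences of `L`. -/
def ExSet (L : FirstOrder.Language) (k : ℕ) : Set L.Sentence := {φ | QHier true k φ}
/-- The set of `∀ₖ`-sentences of `L`. -/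
def AllSet (L : FirstOrder.Language) (k : ℕ) : Set L.Sentence := {φ | QHier false k φ}

/-- A level-sentence set: the set of `∃ₖ`- or of `∀ₖ`-sentences for some `k`. -/
def IsLevelSet {L : FirstOrder.Language} (Λ : Set L.Sentence) : Prop :=
  ∃ k, Λ = ExSet L k ∨ Λ = AllSet L k

/-- `¬Λ`: the set of sentences (logically) equivalent to the negation of a sentence in `Λ`. -/
def NegOf {L : FirstOrder.Language} (Λ : Set L.Sentence) : Set L.Sentence :=
  {ψ | ∃ χ ∈ Λ, (∅ : L.Theory) ⊨ᵇ ψ.iff χ.not}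

/-- `Th_Λ(S)`: the set of `Λ`-sentences provable from (equivalently, entailed by) `S`. -/
def ThL {L : FirstOrder.Language} (Λ : Set L.Sentence) (S : L.Theory) : Set L.Sentence :=
  {ψ ∈ Λ | S ⊨ᵇ ψ}


section Aux
open FirstOrder.Language.BoundedFormula

universe u v w
variable {L : FirstOrder.Language.{u, v}} {α : Type}

theorem castLE_all' {m n : ℕ} (h : m ≤ n) (φ : L.BoundedFormula α (m + 1)) :
    (φ.all).castLE h = (φ.castLE (Nat.succ_le_succ h)).all := by
  simp [castLE]

theorem castLE_ex' {m n : ℕ} (h : m ≤ n) (φ : L.BoundedFormula α (m + 1)) :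
    (φ.ex).castLE h = (φ.castLE (Nat.succ_le_succ h)).ex := by
  simp [BoundedFormula.ex, BoundedFormula.not, castLE]; exact ⟨rfl, rfl⟩

theorem liftAt_ex' {n : ℕ} (n' m : ℕ) (φ : L.BoundedFormula α (n + 1)) :
    (φ.ex).liftAt n' m =
      ((φ.liftAt n' m).castLE (by omega)).ex := by
  simp [liftAt, mapTermRel, BoundedFormula.ex, BoundedFormula.not, castLE]; exact ⟨rfl, rfl⟩

theorem liftAt_all' {n : ℕ} (n' m : ℕ) (φ : L.BoundedFormula α (n + 1)) :
    (φ.all).liftAt n' m =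
      ((φ.liftAt n' m).castLE (by omega)).all := by
  simp [liftAt, mapTermRel, castLE]

/-- Number of logical connectives, ignoring terms. -/
def fdepth : ∀ {n : ℕ}, L.BoundedFormula α n → ℕ
  | _, .falsum => 0
  | _, .equal _ _ => 0
  | _, .rel _ _ => 0
  | _, .imp f g => max (fdepth f) (fdepth g) + 1
  | _, .all f => fdepth f + 1

theorem fdepth_castLE : ∀ {m n : ℕ} (h : m ≤ n) (φ : L.BoundedFormula α m),
    fdepth (φ.castLE h) = fdepth φ
  | _, _, _, .falsum => rfl
  | _, _, _, .equal _ _ => rfl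
  | _, _, _, .rel _ _ => rfl
  | _, _, h, .imp f g => by
      simp [castLE, fdepth, fdepth_castLE h f, fdepth_castLE h g]
  | _, _, h, .all f => by
      simp [castLE, fdepth, fdepth_castLE _ f]

theorem fdepth_liftAt : ∀ {n : ℕ} (n' m : ℕ) (φ : L.BoundedFormula α n),
    fdepth (φ.liftAt n' m) = fdepth φ
  | _, _, _, .falsum => rfl
  | _, _, _, .equal _ _ => rfl
  | _, _, _, .rel _ _ => rfl
  | _, n', m, .imp f g => by
      have h1 := fdepth_liftAt n' m f
      have h2 := fdepth_liftAt n' m g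
      simp only [liftAt] at h1 h2 ⊢
      simp [mapTermRel, fdepth, h1, h2]
  | _, n', m, .all f => by
      have h1 := fdepth_liftAt n' m f
      simp only [liftAt] at h1 ⊢
      simp [mapTermRel, fdepth, fdepth_castLE, h1]

theorem fdepth_ex {n : ℕ} (φ : L.BoundedFormula α (n + 1)) :
    fdepth φ.ex = fdepth φ + 3 := by
  simp [BoundedFormula.ex, BoundedFormula.not, fdepth]

theorem qhier_castLE {b : Bool} {k m : ℕ} {φ : L.BoundedFormula α m} (hφ : QHier b k φ) :
    ∀ {n : ℕ} (h : m ≤ n), QHier b k (φ.castLE h) := by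
  induction hφ with
  | qf h => exact fun h' => .qf (h.castLE)
  | ex _ ih => intro n h'; rw [castLE_ex']; exact .ex (ih _)
  | all _ ih => intro n h'; rw [castLE_all']; exact .all (ih _)
  | dual _ ih => exact fun h' => .dual (ih h')

theorem qhier_liftAt {b : Bool} {k m : ℕ} {φ : L.BoundedFormula α m} (hφ : QHier b k φ) :
    ∀ (n' l : ℕ), QHier b k (φ.liftAt n' l) := by
  induction hφ with
  | qf h => exact fun n' l => .qf (h.liftAt)
  | ex _ ih => intro n' l; rw [liftAt_ex']; exact .ex (qhier_castLE (ih n' l) _)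
  | all _ ih => intro n' l; rw [liftAt_all']; exact .all (qhier_castLE (ih n' l) _)
  | dual _ ih => exact fun n' l => .dual (ih n' l)

theorem qhier_true_inv {k n : ℕ} {φ : L.BoundedFormula α n} (h : QHier true (k + 1) φ) :
    QHier false k φ ∨ ∃ φ₀ : L.BoundedFormula α (n + 1), φ = φ₀.ex ∧ QHier true (k + 1) φ₀ := by
  cases h with
  | qf h => exact .inl (.qf h)
  | ex h => exact .inr ⟨_, rfl, h⟩
  | dual h => exact .inl h

theorem qhier_false_inv {k n : ℕ} {φ : L.BoundedFormula α n} (h : QHier false (k + 1) φ) :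
    QHier true k φ ∨ ∃ φ₀ : L.BoundedFormula α (n + 1), φ = φ₀.all ∧ QHier false (k + 1) φ₀ := by
  cases h with
  | qf h => exact .inl (.qf h)
  | all h => exact .inr ⟨_, rfl, h⟩
  | dual h => exact .inl h

theorem realize_liftAt_snoc {n : ℕ} (φ : L.BoundedFormula α n) {M : Type w} [L.Structure M]
    (v : α → M) (xs : Fin n → M) (a : M) :
    (φ.liftAt 1 n).Realize v (Fin.snoc xs a) ↔ φ.Realize v xs := by
  rw [realize_liftAt_one_self]
  constructor <;> (intro h; convert h using 2; funext i; simp)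

/-- Combine two propositions by `∧` (if `j`) or `∨`. -/
def cmb (j : Bool) (P Q : Prop) : Prop := if j then P ∧ Q else P ∨ Q

theorem cmb_exists {ι : Sort*} [Nonempty ι] (j : Bool) (p : ι → Prop) (q : Prop) :
    (∃ a, cmb j (p a) q) ↔ cmb j (∃ a, p a) q := by
  cases j <;> simp [cmb, exists_or, exists_and_right]

theorem cmb_forall {ι : Sort*} [Nonempty ι] (j : Bool) (p : ι → Prop) (q : Prop) :
    (∀ a, cmb j (p a) q) ↔ cmb j (∀ a, p a) q := by
  cases j
  · show (∀ a, p a ∨ q) ↔ (∀ a, p a) ∨ q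
    constructor
    · intro h
      by_cases hq : q
      exacts [.inr hq, .inl fun a => (h a).resolve_right hq]
    · rintro (h | h) a
      exacts [.inl (h a), .inr h]
  · show (∀ a, p a ∧ q) ↔ (∀ a, p a) ∧ q
    simp [forall_and]

theorem cmb_comm (j : Bool) (P Q : Prop) : cmb j P Q ↔ cmb j Q P := by
  cases j <;> simp [cmb, and_comm, or_comm]

theorem qhier_comb (k : ℕ) : ∀ (N : ℕ) (b j : Bool) {n : ℕ} (φ ψ : L.BoundedFormula α n),
    fdepth φ + fdepth ψ ≤ N → QHier b k φ → QHier b k ψ →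
    ∃ χ : L.BoundedFormula α n, QHier b k χ ∧
      ∀ (M : Type w) [L.Structure M] [Nonempty M] (v : α → M) (xs : Fin n → M),
        χ.Realize v xs ↔ cmb j (φ.Realize v xs) (ψ.Realize v xs) := by
  induction k with
  | zero =>
    intro N b j n φ ψ _ hφ hψ
    have hφ' : φ.IsQF := by cases hφ with | qf h => exact h
    have hψ' : ψ.IsQF := by cases hψ with | qf h => exact h
    cases j
    · exact ⟨φ ⊔ ψ, .qf (hφ'.sup hψ'), fun M _ _ v xs => by simp [cmb]⟩
    · exact ⟨φ ⊓ ψ, .qf (hφ'.inf hψ'), fun M _ _ v xs => by simp [cmb]⟩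
  | succ k IHk =>
    intro N
    induction N using Nat.strong_induction_on with
    | _ N IHN =>
    intro b j n φ ψ hd hφ hψ
    cases b
    · -- b = false : ∀-level
      rcases qhier_false_inv hφ with hφS | ⟨φ₀, rfl, hφ₀⟩
      · rcases qhier_false_inv hψ with hψS | ⟨ψ₀, rfl, hψ₀⟩
        · obtain ⟨χ, hχ, hE⟩ := IHk (fdepth φ + fdepth ψ) true j φ ψ le_rfl hφS hψS
          exact ⟨χ, .dual hχ, hE⟩
        · -- ψ = ψ₀.all
          have hφ' : QHier false (k + 1) (φ.liftAt 1 n) := .dual (qhier_liftAt hφS 1 n)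
          have hd' : fdepth (ψ₀) + fdepth (φ.liftAt 1 n) < N := by
            have h1 := fdepth_liftAt 1 n φ
            have h2 : fdepth (ψ₀.all) = fdepth ψ₀ + 1 := rfl
            omega
          obtain ⟨χ, hχ, hE⟩ := IHN _ hd' false j ψ₀ (φ.liftAt 1 n) le_rfl hψ₀ hφ'
          refine ⟨χ.all, .all hχ, fun M _ _ v xs => ?_⟩
          rw [realize_all, realize_all]
          calc (∀ a, χ.Realize v (Fin.snoc xs a))
              ↔ ∀ a, cmb j (ψ₀.Realize v (Fin.snoc xs a)) (φ.Realize v xs) := by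
                apply forall_congr'; intro a
                rw [hE M v (Fin.snoc xs a), realize_liftAt_snoc]
            _ ↔ cmb j (∀ a, ψ₀.Realize v (Fin.snoc xs a)) (φ.Realize v xs) := cmb_forall _ _ _
            _ ↔ _ := cmb_comm _ _ _
      · -- φ = φ₀.all
        have hψ' : QHier false (k + 1) (ψ.liftAt 1 n) := qhier_liftAt hψ 1 n
        have hd' : fdepth φ₀ + fdepth (ψ.liftAt 1 n) < N := by
          have h1 := fdepth_liftAt 1 n ψ
          have h2 : fdepth (φ₀.all) = fdepth φ₀ + 1 := rfl
          omega
        obtain ⟨χ, hχ, hE⟩ := IHN _ hd' false j φ₀ (ψ.liftAt 1 n) le_rfl hφ₀ hψ'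
        refine ⟨χ.all, .all hχ, fun M _ _ v xs => ?_⟩
        rw [realize_all, realize_all]
        calc (∀ a, χ.Realize v (Fin.snoc xs a))
            ↔ ∀ a, cmb j (φ₀.Realize v (Fin.snoc xs a)) (ψ.Realize v xs) := by
              apply forall_congr'; intro a
              rw [hE M v (Fin.snoc xs a), realize_liftAt_snoc]
          _ ↔ _ := cmb_forall _ _ _
    · -- b = true : ∃-level
      rcases qhier_true_inv hφ with hφP | ⟨φ₀, rfl, hφ₀⟩
      · rcases qhier_true_inv hψ with hψP | ⟨ψ₀, rfl, hψ₀⟩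
        · obtain ⟨χ, hχ, hE⟩ := IHk (fdepth φ + fdepth ψ) false j φ ψ le_rfl hφP hψP
          exact ⟨χ, .dual hχ, hE⟩
        · have hφ' : QHier true (k + 1) (φ.liftAt 1 n) := .dual (qhier_liftAt hφP 1 n)
          have hd' : fdepth (ψ₀) + fdepth (φ.liftAt 1 n) < N := by
            have h1 := fdepth_liftAt 1 n φ
            have h2 := fdepth_ex ψ₀
            omega
          obtain ⟨χ, hχ, hE⟩ := IHN _ hd' true j ψ₀ (φ.liftAt 1 n) le_rfl hψ₀ hφ'
          refine ⟨χ.ex, .ex hχ, fun M _ _ v xs => ?_⟩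
          rw [realize_ex, realize_ex]
          calc (∃ a, χ.Realize v (Fin.snoc xs a))
              ↔ ∃ a, cmb j (ψ₀.Realize v (Fin.snoc xs a)) (φ.Realize v xs) := by
                apply exists_congr; intro a
                rw [hE M v (Fin.snoc xs a), realize_liftAt_snoc]
            _ ↔ cmb j (∃ a, ψ₀.Realize v (Fin.snoc xs a)) (φ.Realize v xs) := cmb_exists _ _ _
            _ ↔ _ := cmb_comm _ _ _
      · have hψ' : QHier true (k + 1) (ψ.liftAt 1 n) := qhier_liftAt hψ 1 n
        have hd' : fdepth φ₀ + fdepth (ψ.liftAt 1 n) < N := by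
          have h1 := fdepth_liftAt 1 n ψ
          have h2 := fdepth_ex φ₀
          omega
        obtain ⟨χ, hχ, hE⟩ := IHN _ hd' true j φ₀ (ψ.liftAt 1 n) le_rfl hφ₀ hψ'
        refine ⟨χ.ex, .ex hχ, fun M _ _ v xs => ?_⟩
        rw [realize_ex, realize_ex]
        calc (∃ a, χ.Realize v (Fin.snoc xs a))
            ↔ ∃ a, cmb j (φ₀.Realize v (Fin.snoc xs a)) (ψ.Realize v xs) := by
              apply exists_congr; intro a
              rw [hE M v (Fin.snoc xs a), realize_liftAt_snoc]
          _ ↔ _ := cmb_exists _ _ _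

theorem qhier_finset_sup (bb : Bool) (k : ℕ) (s : Finset L.Sentence)
    (hs : ∀ x ∈ s, QHier bb k x) :
    ∃ χ : L.Sentence, QHier bb k χ ∧ ∀ (M : Type w) [L.Structure M] [Nonempty M],
      (M ⊨ χ ↔ ∃ x ∈ s, M ⊨ x) := by
  classical
  induction s using Finset.induction_on with
  | empty => exact ⟨⊥, .qf isQF_bot, fun M _ _ => by simp [Sentence.Realize, Formula.Realize]⟩
  | @insert x t hx ih =>
    obtain ⟨χ, hχ, hE⟩ := ih (fun y hy => hs y (Finset.mem_insert_of_mem hy))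
    obtain ⟨χ', hχ', hE'⟩ := qhier_comb k (fdepth x + fdepth χ) bb false x χ le_rfl
      (hs x (Finset.mem_insert_self x t)) hχ
    refine ⟨χ', hχ', fun M _ _ => ?_⟩
    have h0 : (M ⊨ χ') ↔ cmb false (M ⊨ x) (M ⊨ χ) := hE' M default default
    rw [h0, hE M]
    show (M ⊨ x) ∨ _ ↔ _
    simp [Finset.mem_insert, or_and_right, exists_or]

theorem qhier_finset_inf (bb : Bool) (k : ℕ) (s : Finset L.Sentence)
    (hs : ∀ x ∈ s, QHier bb k x) :
    ∃ χ : L.Sentence, QHier bb k χ ∧ ∀ (M : Type w) [L.Structure M] [Nonempty M],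
      (M ⊨ χ ↔ ∀ x ∈ s, M ⊨ x) := by
  classical
  induction s using Finset.induction_on with
  | empty => exact ⟨⊤, .qf IsQF.top, fun M _ _ => by simp [Sentence.Realize, Formula.Realize]⟩
  | @insert x t hx ih =>
    obtain ⟨χ, hχ, hE⟩ := ih (fun y hy => hs y (Finset.mem_insert_of_mem hy))
    obtain ⟨χ', hχ', hE'⟩ := qhier_comb k (fdepth x + fdepth χ) bb true x χ le_rfl
      (hs x (Finset.mem_insert_self x t)) hχ
    refine ⟨χ', hχ', fun M _ _ => ?_⟩
    have h0 : (M ⊨ χ') ↔ cmb true (M ⊨ x) (M ⊨ χ) := hE' M default default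
    rw [h0, hE M]
    show (M ⊨ x) ∧ _ ↔ _
    simp [Finset.mem_insert, forall_and]

end Aux

/-- If `A ⊬ φ ↔ ψ` for every `ψ ∈ ¬Λ`, then there are complete consistent theories
`T⁺ ⊇ A ∪ {φ}` and `T⁻ ⊇ A ∪ {¬φ}` with `Λ ∩ T⁻ ⊆ Λ ∩ T⁺`. -/
theorem statement2 {L : FirstOrder.Language} (Λ : Set L.Sentence) (A : L.Theory) (φ : L.Sentence)
    (hΛ : IsLevelSet Λ) (hφ : ∀ ψ ∈ NegOf Λ, ¬ A ⊨ᵇ (φ.iff ψ)) :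
    ∃ Tp Tm : L.Theory, Tp.IsMaximal ∧ Tm.IsMaximal ∧
      A ∪ {φ} ⊆ Tp ∧ A ∪ {φ.not} ⊆ Tm ∧ Λ ∩ Tm ⊆ Λ ∩ Tp := by
  classical
  obtain ⟨k, hk⟩ := hΛ
  have hΛ' : ∃ bb : Bool, Λ = {x : L.Sentence | QHier bb k x} := by
    rcases hk with h | h
    exacts [⟨true, h⟩, ⟨false, h⟩]
  obtain ⟨bb, rfl⟩ := hΛ'
  have key : ∃ M : A.ModelType, (M ⊨ φ.not) ∧
      (A ∪ {φ} ∪ {x : L.Sentence | QHier bb k x ∧ M ⊨ x}).IsSatisfiable := by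
    by_contra h2
    push_neg at h2
    have hM : ∀ M : A.ModelType, M ⊨ φ.not →
        ∃ χ : L.Sentence, QHier bb k χ ∧ (M ⊨ χ) ∧ ¬(A ∪ {φ} ∪ {χ}).IsSatisfiable := by
      intro M hMφ
      have hns := h2 M hMφ
      rw [Theory.isSatisfiable_iff_isFinitelySatisfiable, Theory.IsFinitelySatisfiable] at hns
      push_neg at hns
      obtain ⟨T0, hT0sub, hT0unsat⟩ := hns
      set s : Finset L.Sentence := T0.filter (fun x => QHier bb k x ∧ M ⊨ x) with hs_def
      have hsQ : ∀ x ∈ s, QHier bb k x := fun x hx => ((Finset.mem_filter.1 hx).2).1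
      obtain ⟨χ, hχQ, hχE⟩ := qhier_finset_inf bb k s hsQ
      refine ⟨χ, hχQ, (hχE M).2 (fun x hx => ((Finset.mem_filter.1 hx).2).2), ?_⟩
      rintro ⟨N⟩
      have hNχ : (N : Type _) ⊨ χ :=
        Theory.realize_sentence_of_mem (T := A ∪ {φ} ∪ {χ}) (Or.inr rfl)
      haveI : (N : Type _) ⊨ (T0 : L.Theory) := by
        rw [Theory.model_iff]
        intro x hx
        rcases hT0sub hx with (h | h) | h
        · exact Theory.realize_sentence_of_mem (T := A ∪ {φ} ∪ {χ}) (Or.inl (Or.inl h))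
        · exact Theory.realize_sentence_of_mem (T := A ∪ {φ} ∪ {χ}) (Or.inl (Or.inr h))
        · exact (hχE N).1 hNχ x (Finset.mem_filter.2 ⟨hx, h⟩)
      exact hT0unsat (Theory.Model.isSatisfiable N)
    set D : L.Theory := {χ | QHier bb k χ ∧ ¬(A ∪ {φ} ∪ {χ}).IsSatisfiable} with hD_def
    have hU : ¬(A ∪ {φ.not} ∪ (BoundedFormula.not '' D)).IsSatisfiable := by
      rintro ⟨N⟩
      haveI hNA : (N : Type _) ⊨ A :=
        N.is_model.mono (Set.subset_union_left.trans Set.subset_union_left)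
      let M' : A.ModelType := Theory.ModelType.of A N
      have hM'φ : M' ⊨ φ.not :=
        Theory.realize_sentence_of_mem (M := (N : Type _))
          (T := A ∪ {φ.not} ∪ (BoundedFormula.not '' D)) (Or.inl (Or.inr rfl))
      obtain ⟨χ, hQ, hMχ, hUn⟩ := hM M' hM'φ
      have hnot : (N : Type _) ⊨ χ.not :=
        Theory.realize_sentence_of_mem (T := A ∪ {φ.not} ∪ (BoundedFormula.not '' D))
          (Or.inr ⟨χ, ⟨hQ, hUn⟩, rfl⟩)
      exact hnot hMχ
    rw [Theory.isSatisfiable_iff_isFinitelySatisfiable, Theory.IsFinitelySatisfiable] at hU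
    push_neg at hU
    obtain ⟨T1, hT1sub, hT1unsat⟩ := hU
    have hinj : Function.Injective (fun x : L.Sentence => x.not) := by
      intro x y h
      simp only [BoundedFormula.not] at h
      injection h
    set D' : Set L.Sentence := {χ | χ ∈ D ∧ χ.not ∈ (T1 : Set L.Sentence)} with hD'_def
    have hD'fin : D'.Finite := by
      apply Set.Finite.subset (Set.Finite.preimage hinj.injOn T1.finite_toSet)
      intro x hx
      exact hx.2
    obtain ⟨χs, hχsQ, hχsE⟩ := qhier_finset_sup bb k hD'fin.toFinset
      (fun x hx => ((hD'fin.mem_toFinset.1 hx).1).1)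
    have hiff : A ⊨ᵇ φ.iff χs.not := by
      rw [Theory.models_sentence_iff]
      intro M
      have h1 : M ⊨ φ → ¬ M ⊨ χs := by
        intro hMφ hMχ
        obtain ⟨x, hxF, hxM⟩ := (hχsE M).1 hMχ
        have hxD : x ∈ D' := hD'fin.mem_toFinset.1 hxF
        apply hxD.1.2
        haveI : (M : Type _) ⊨ A ∪ {φ} ∪ {x} := by
          rw [Theory.model_union_iff, Theory.model_union_iff]
          exact ⟨⟨M.is_model, Theory.model_singleton_iff.2 hMφ⟩, Theory.model_singleton_iff.2 hxM⟩
        exact Theory.Model.isSatisfiable M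
      have h2 : ¬ M ⊨ χs → M ⊨ φ := by
        intro hMχ
        by_contra hMφ
        apply hT1unsat
        haveI : (M : Type _) ⊨ (T1 : L.Theory) := by
          rw [Theory.model_iff]
          intro x hx
          rcases hT1sub hx with (h | h) | h
          · exact Theory.realize_sentence_of_mem (T := A) h
          · rw [Set.mem_singleton_iff.1 h]
            exact (Sentence.realize_not _).2 hMφ
          · obtain ⟨y, hyD, rfl⟩ := h
            refine (Sentence.realize_not _).2 ?_
            intro hMy
            exact hMχ ((hχsE M).2 ⟨y, hD'fin.mem_toFinset.2 ⟨hyD, hx⟩, hMy⟩)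
        exact Theory.Model.isSatisfiable M
      have hmain : (M ⊨ φ) ↔ ¬ M ⊨ χs := ⟨h1, h2⟩
      exact Formula.realize_iff.2 (hmain.trans (Sentence.realize_not (M := (M : Type _))).symm)
    exact hφ χs.not ⟨χs, hχsQ,
      Theory.models_sentence_iff.2 (fun M => Formula.realize_iff.2 Iff.rfl)⟩ hiff
  obtain ⟨M, hMφn, hSat⟩ := key
  obtain ⟨N⟩ := hSat
  refine ⟨L.completeTheory N, L.completeTheory M, completeTheory.isMaximal L N,
    completeTheory.isMaximal L M, ?_, ?_, ?_⟩
  · intro x hx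
    rw [mem_completeTheory]
    exact Theory.realize_sentence_of_mem
      (T := A ∪ {φ} ∪ {x : L.Sentence | QHier bb k x ∧ M ⊨ x}) (Or.inl hx)
  · intro x hx
    rw [mem_completeTheory]
    rcases hx with h | h
    · exact Theory.realize_sentence_of_mem (T := A) h
    · rw [Set.mem_singleton_iff.1 h]
      exact hMφn
  · rintro x ⟨hxΛ, hxTm⟩
    refine ⟨hxΛ, ?_⟩
    rw [mem_completeTheory] at hxTm ⊢
    exact Theory.realize_sentence_of_mem
      (T := A ∪ {φ} ∪ {y : L.Sentence | QHier bb k y ∧ M ⊨ y}) (Or.inr ⟨hxΛ, hxTm⟩)
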